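/- arXiv:1404.7328 — 2 statements merged into one kernel-verified Lean document; each statement's English description precedes it below -/
import Mathlib

section
/- Let (a_n)_{n≥1} be a sequence of real numbers and define functionals T_n on c_0 (the space of real sequences converging to 0 with the supremum norm) by T_n x = a_n x_n. Then the R-bound of the family {T_n : n ≥ 1} equals the ℓ²-norm of (a_n): ℛ({T_n : n ≥ 1}) = (∑_{n≥1} a_n²)^{1/2} (both sides possibly infinite). -/
open MeasureTheory ProbabilityTheory Filter ENNReal

noncomputable section

/-- `ξ` is an independent family of Rademacher random variables on `(Ω, μ)`,
i.e. `P(ξ i = 1) = P(ξ i = -1) = 1/2`. -/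
def IsRademacherFam {ι Ω : Type*} [MeasurableSpace Ω] (μ : Measure Ω) (ξ : ι → Ω → ℝ) : Prop :=
  IsProbabilityMeasure μ ∧ (∀ i, Measurable (ξ i)) ∧
    iIndepFun ξ μ ∧
    ∀ i, μ.map (ξ i) =
      (2 : ℝ≥0∞)⁻¹ • Measure.dirac (1 : ℝ) + (2 : ℝ≥0∞)⁻¹ • Measure.dirac (-1 : ℝ)

/-- `ξ` is an independent family of standard Gaussian random variables on `(Ω, μ)`. -/
def IsGaussianFam {ι Ω : Type*} [MeasurableSpace Ω] (μ : Measure Ω) (ξ : ι → Ω → ℝ) : Prop :=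
  IsProbabilityMeasure μ ∧ (∀ i, Measurable (ξ i)) ∧
    iIndepFun ξ μ ∧
    ∀ i, μ.map (ξ i) = gaussianReal 0 1

/-- The randomized boundedness condition for a family of operators `𝒯 ⊆ L(X,Y)`, with
constant `C`, relative to the random sequence `ξ`:
`(E ‖∑ ξ_n T_n x_n‖²)^{1/2} ≤ C (E ‖∑ ξ_n x_n‖²)^{1/2}` for all finite choices
`T_n ∈ 𝒯` (repetitions allowed) and `x_n ∈ X`.  For `ξ` a Rademacher sequence this is
`R`-boundedness with constant `C`; for `ξ` a Gaussian sequence it is `γ`-boundedness. -/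
def BoundedWith {X Y Ω : Type*} [NormedAddCommGroup X] [NormedSpace ℝ X]
    [NormedAddCommGroup Y] [NormedSpace ℝ Y] [MeasurableSpace Ω]
    (μ : Measure Ω) (ξ : ℕ → Ω → ℝ) (𝒯 : Set (X →L[ℝ] Y)) (C : ℝ) : Prop :=
  ∀ (N : ℕ) (T : Fin N → X →L[ℝ] Y) (x : Fin N → X), (∀ n, T n ∈ 𝒯) →
    Real.sqrt (∫ ω, ‖∑ n : Fin N, ξ n.1 ω • T n (x n)‖ ^ 2 ∂μ) ≤
      C * Real.sqrt (∫ ω, ‖∑ n : Fin N, ξ n.1 ω • x n‖ ^ 2 ∂μ)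

/-- The family `𝒯` is bounded (R- or γ-, according to `ξ`). -/
def IsBoundedFam {X Y Ω : Type*} [NormedAddCommGroup X] [NormedSpace ℝ X]
    [NormedAddCommGroup Y] [NormedSpace ℝ Y] [MeasurableSpace Ω]
    (μ : Measure Ω) (ξ : ℕ → Ω → ℝ) (𝒯 : Set (X →L[ℝ] Y)) : Prop :=
  ∃ C : ℝ, 0 ≤ C ∧ BoundedWith μ ξ 𝒯 C

/-- The bound (R-bound or γ-bound according to `ξ`) of the family `𝒯`, defined as the least
admissible constant. -/
def boundConst {X Y Ω : Type*} [NormedAddCommGroup X] [NormedSpace ℝ X]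
    [NormedAddCommGroup Y] [NormedSpace ℝ Y] [MeasurableSpace Ω]
    (μ : Measure Ω) (ξ : ℕ → Ω → ℝ) (𝒯 : Set (X →L[ℝ] Y)) : ℝ :=
  sInf {C : ℝ | 0 ≤ C ∧ BoundedWith μ ξ 𝒯 C}

/-- `X` has cotype `q` (with respect to the random sequence `ξ`):
`(∑ ‖x_n‖^q)^{1/q} ≤ C (E‖∑ ξ_n x_n‖²)^{1/2}`. -/
def HasCotype (X : Type*) [NormedAddCommGroup X] [NormedSpace ℝ X] {Ω : Type*}
    [MeasurableSpace Ω] (μ : Measure Ω) (ξ : ℕ → Ω → ℝ) (q : ℝ) : Prop :=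
  ∃ C : ℝ, 0 ≤ C ∧ ∀ (N : ℕ) (x : Fin N → X),
    (∑ n, ‖x n‖ ^ q) ^ (1 / q) ≤ C * Real.sqrt (∫ ω, ‖∑ n : Fin N, ξ n.1 ω • x n‖ ^ 2 ∂μ)

/-- `X` has finite cotype: it has cotype `q` for some `q ∈ [2, ∞)`. -/
def HasFiniteCotype (X : Type*) [NormedAddCommGroup X] [NormedSpace ℝ X] {Ω : Type*}
    [MeasurableSpace Ω] (μ : Measure Ω) (ξ : ℕ → Ω → ℝ) : Prop :=
  ∃ q : ℝ, 2 ≤ q ∧ HasCotype X μ ξ q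


/-- The cotype-2 condition for an operator `A : X → Y`, with constant `C`, relative to the
random sequence `ξ`: `(∑ ‖A x_i‖²)^{1/2} ≤ C (E‖∑ ξ_i x_i‖²)^{1/2}`.  For a Rademacher
sequence `ξ` this is the Rademacher cotype-2 condition, for a Gaussian sequence the
Gaussian cotype-2 condition. -/
def Cotype2With {X Y Ω : Type*} [NormedAddCommGroup X] [NormedSpace ℝ X]
    [NormedAddCommGroup Y] [NormedSpace ℝ Y] [MeasurableSpace Ω]
    (μ : Measure Ω) (ξ : ℕ → Ω → ℝ) (A : X →L[ℝ] Y) (C : ℝ) : Prop :=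
  ∀ (k : ℕ) (x : Fin k → X),
    Real.sqrt (∑ i, ‖A (x i)‖ ^ 2) ≤
      C * Real.sqrt (∫ ω, ‖∑ i : Fin k, ξ i.1 ω • x i‖ ^ 2 ∂μ)

/-- The cotype-2 constant of an operator (Rademacher or Gaussian according to `ξ`). -/
def cotype2Const {X Y Ω : Type*} [NormedAddCommGroup X] [NormedSpace ℝ X]
    [NormedAddCommGroup Y] [NormedSpace ℝ Y] [MeasurableSpace Ω]
    (μ : Measure Ω) (ξ : ℕ → Ω → ℝ) (A : X →L[ℝ] Y) : ℝ :=
  sInf {C : ℝ | 0 ≤ C ∧ Cotype2With μ ξ A C}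

/-- The `ℓ²`-boundedness condition with constant `C` for a family of functionals on
`ℓ^∞_M = (Fin M → ℝ)` (with the sup norm):
`(∑ |S_i x_i|²)^{1/2} ≤ C · max_m (∑ |x_i(m)|²)^{1/2}`. -/
def Ell2BoundedWith (M : ℕ) (𝒯 : Set ((Fin M → ℝ) →L[ℝ] ℝ)) (C : ℝ) : Prop :=
  ∀ (k : ℕ) (S : Fin k → (Fin M → ℝ) →L[ℝ] ℝ) (x : Fin k → Fin M → ℝ), (∀ i, S i ∈ 𝒯) →
    Real.sqrt (∑ i, S i (x i) ^ 2) ≤ C * Real.sqrt (⨆ m : Fin M, ∑ i, x i m ^ 2)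

/-- The `ℓ²`-bound of a family of functionals on `ℓ^∞_M`. -/
def ell2BoundConst (M : ℕ) (𝒯 : Set ((Fin M → ℝ) →L[ℝ] ℝ)) : ℝ :=
  sInf {C : ℝ | 0 ≤ C ∧ Ell2BoundedWith M 𝒯 C}

/-- The 2-summing condition with constant `C` for an operator `A : ℓ^∞_M → Y`; recall that
for the domain `ℓ^∞_M` the supremum over the dual unit ball equals the maximum over the
coordinates, i.e. `(∑ ‖A x_i‖²)^{1/2} ≤ C · max_m (∑ |x_i(m)|²)^{1/2}`. -/
def Pi2With (M : ℕ) {Y : Type*} [NormedAddCommGroup Y] [NormedSpace ℝ Y]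
    (A : (Fin M → ℝ) →L[ℝ] Y) (C : ℝ) : Prop :=
  ∀ (k : ℕ) (x : Fin k → Fin M → ℝ),
    Real.sqrt (∑ i, ‖A (x i)‖ ^ 2) ≤ C * Real.sqrt (⨆ m : Fin M, ∑ i, x i m ^ 2)

/-- The 2-summing norm `π₂(A)` of an operator `A : ℓ^∞_M → Y`. -/
def pi2Const (M : ℕ) {Y : Type*} [NormedAddCommGroup Y] [NormedSpace ℝ Y]
    (A : (Fin M → ℝ) →L[ℝ] Y) : ℝ :=
  sInf {C : ℝ | 0 ≤ C ∧ Pi2With M A C}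

/-- `X` has (Rademacher) type `p` with respect to the random sequence `ξ`:
`(E‖∑ ξ_n x_n‖^p)^{1/p} ≤ τ (∑ ‖x_n‖^p)^{1/p}`. -/
def HasTypeP (X : Type*) [NormedAddCommGroup X] [NormedSpace ℝ X] {Ω : Type*}
    [MeasurableSpace Ω] (μ : Measure Ω) (ξ : ℕ → Ω → ℝ) (p : ℝ) : Prop :=
  ∃ τ : ℝ, 0 ≤ τ ∧ ∀ (N : ℕ) (x : Fin N → X),
    (∫ ω, ‖∑ n : Fin N, ξ n.1 ω • x n‖ ^ p ∂μ) ^ (1 / p) ≤ τ * (∑ n, ‖x n‖ ^ p) ^ (1 / p)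

/-- `X` has nontrivial type: type `p` for some `p ∈ (1, 2]`. -/
def HasNontrivialType (X : Type*) [NormedAddCommGroup X] [NormedSpace ℝ X] {Ω : Type*}
    [MeasurableSpace Ω] (μ : Measure Ω) (ξ : ℕ → Ω → ℝ) : Prop :=
  ∃ p : ℝ, 1 < p ∧ p ≤ 2 ∧ HasTypeP X μ ξ p

/-- The Banach space adjoint `T* : Y* → X*` of `T : X → Y`, given by `T* y* = y* ∘ T`. -/
def banachAdjoint {X Y : Type*} [NormedAddCommGroup X] [NormedSpace ℝ X]
    [NormedAddCommGroup Y] [NormedSpace ℝ Y] (T : X →L[ℝ] Y) :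
    (Y →L[ℝ] ℝ) →L[ℝ] (X →L[ℝ] ℝ) :=
  (ContinuousLinearMap.compSL X Y ℝ (RingHom.id ℝ) (RingHom.id ℝ)).flip T

/-! Orthonormality of the Rademacher sequence gives `E|∑ rₙ yₙ|² = ∑ yₙ²` for real `yₙ`.
Testing the family on the unit vectors `eₙ`, for which `‖∑ rₙ eₙ‖ ≤ 1` almost surely in `c₀`,
gives `∑ aₙ² ≤ C²`. Conversely, any functional `φ` satisfies
`∑ φ(xₙ)² = E|φ(∑ rₙ xₙ)|² ≤ ‖φ‖² E‖∑ rₙ xₙ‖²`. Each operator `Sₙ` of the family is some `T_m`,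
so summing this inequality over the finitely many `T_m` that occur bounds `∑ |Sₙ xₙ|²` by
`(∑ ‖T_m‖²) E‖∑ rₙ xₙ‖²`, and `‖T_m‖ ≤ |a_m|`. -/

namespace IsRademacherFam

variable {ι Ω : Type*} [MeasurableSpace Ω] {μ : Measure Ω} {r : ι → Ω → ℝ}

lemma comp_injective {κ : Type*} {e : κ → ι} (hr : IsRademacherFam μ r)
    (he : Function.Injective e) : IsRademacherFam μ (fun k ↦ r (e k)) :=
  ⟨hr.1, fun k ↦ hr.2.1 (e k), hr.2.2.1.precomp he, fun k ↦ hr.2.2.2 (e k)⟩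

lemma ae_abs_eq_one (hr : IsRademacherFam μ r) (i : ι) : ∀ᵐ ω ∂μ, |r i ω| = 1 := by
  obtain ⟨_, hm, -, hd⟩ := hr
  have hs : MeasurableSet ({1, -1} : Set ℝ) := (measurableSet_singleton (-1)).insert 1
  have hnull : μ.map (r i) {1, -1}ᶜ = 0 := by
    simp [hd i, Measure.dirac_apply' _ hs.compl]
  rw [Measure.map_apply (hm i) hs.compl] at hnull
  filter_upwards [measure_eq_zero_iff_ae_notMem.mp hnull] with ω hω
  simp only [Set.preimage_compl, Set.mem_compl_iff, Set.mem_preimage, not_not,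
    Set.mem_insert_iff, Set.mem_singleton_iff] at hω
  rcases hω with h | h <;> simp [h]

lemma integral_comp (hr : IsRademacherFam μ r) (i : ι) (f : ℝ → ℝ) :
    ∫ ω, f (r i ω) ∂μ = (f 1 + f (-1)) / 2 := by
  have hdirac (t : ℝ) : Integrable f ((2 : ℝ≥0∞)⁻¹ • Measure.dirac t) :=
    ((integrable_const (f t)).congr (ae_eq_dirac f).symm).smul_measure (by simp)
  have hf : AEStronglyMeasurable f (μ.map (r i)) := by
    rw [hr.2.2.2 i]; exact ((hdirac 1).add_measure (hdirac (-1))).aestronglyMeasurable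
  rw [← integral_map (hr.2.1 i).aemeasurable hf, hr.2.2.2 i,
    integral_add_measure (hdirac 1) (hdirac (-1)), integral_smul_measure, integral_smul_measure,
    integral_dirac, integral_dirac]
  simp [ENNReal.toReal_inv]
  ring

lemma integral_mul [DecidableEq ι] (hr : IsRademacherFam μ r) (i j : ι) :
    ∫ ω, r i ω * r j ω ∂μ = if i = j then 1 else 0 := by
  split_ifs with hij
  · subst hij
    exact (hr.integral_comp i fun t ↦ t * t).trans (by norm_num)
  · have hmean (k : ι) : ∫ ω, r k ω ∂μ = 0 := (hr.integral_comp k id).trans (by norm_num)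
    have hindep : IndepFun (r i) (r j) μ := hr.2.2.1.indepFun hij
    have := hindep.integral_mul_eq_mul_integral (hr.2.1 i).aestronglyMeasurable
      (hr.2.1 j).aestronglyMeasurable
    simpa [hmean] using this

lemma integrable_mul (hr : IsRademacherFam μ r) (i j : ι) :
    Integrable (fun ω ↦ r i ω * r j ω) μ := by
  have := hr.1
  refine ⟨((hr.2.1 i).mul (hr.2.1 j)).aestronglyMeasurable, .of_bounded (C := 1) ?_⟩
  filter_upwards [hr.ae_abs_eq_one i, hr.ae_abs_eq_one j] with ω hi hj
  simp [hi, hj]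

lemma integral_norm_sum_smul_sq [Fintype ι] (hr : IsRademacherFam μ r) (y : ι → ℝ) :
    ∫ ω, ‖∑ i, r i ω • y i‖ ^ 2 ∂μ = ∑ i, y i ^ 2 := by
  classical
  have hexpand (ω : Ω) : ‖∑ i, r i ω • y i‖ ^ 2 = ∑ i, ∑ j, y i * y j * (r i ω * r j ω) := by
    rw [Real.norm_eq_abs, sq_abs, sq, Finset.sum_mul_sum]
    simp only [smul_eq_mul]
    exact Finset.sum_congr rfl fun i _ ↦ Finset.sum_congr rfl fun j _ ↦ by ring
  simp_rw [hexpand]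
  rw [integral_finsetSum _ fun i _ ↦ integrable_finsetSum _ fun j _ ↦
    (hr.integrable_mul i j).const_mul _]
  refine Finset.sum_congr rfl fun i _ ↦ ?_
  rw [integral_finsetSum _ fun j _ ↦ (hr.integrable_mul i j).const_mul _]
  simp [integral_const_mul, hr.integral_mul, sq]

lemma integrable_norm_sum_smul_sq [Fintype ι] {X : Type*} [NormedAddCommGroup X]
    [NormedSpace ℝ X] (hr : IsRademacherFam μ r) (x : ι → X) :
    Integrable (fun ω ↦ ‖∑ i, r i ω • x i‖ ^ 2) μ := by
  have := hr.1
  have hmeas : AEStronglyMeasurable (fun ω ↦ ∑ i, r i ω • x i) μ :=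
    Finset.aestronglyMeasurable_fun_sum _ fun i _ ↦ (hr.2.1 i).aestronglyMeasurable.smul_const _
  refine ⟨hmeas.norm.pow 2, .of_bounded (C := (∑ i, ‖x i‖) ^ 2) ?_⟩
  filter_upwards [ae_all_iff.mpr hr.ae_abs_eq_one] with ω hω
  rw [Real.norm_eq_abs, abs_of_nonneg (by positivity)]
  gcongr
  refine (norm_sum_le _ _).trans (Finset.sum_le_sum fun i _ ↦ ?_)
  rw [norm_smul, Real.norm_eq_abs, hω i, one_mul]

lemma sum_sq_apply_le [Fintype ι] {X : Type*} [NormedAddCommGroup X] [NormedSpace ℝ X]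
    (hr : IsRademacherFam μ r) (φ : X →L[ℝ] ℝ) (x : ι → X) :
    ∑ i, φ (x i) ^ 2 ≤ ‖φ‖ ^ 2 * ∫ ω, ‖∑ i, r i ω • x i‖ ^ 2 ∂μ := by
  rw [← hr.integral_norm_sum_smul_sq, ← integral_const_mul]
  refine integral_mono_of_nonneg (.of_forall fun ω ↦ by positivity)
    ((hr.integrable_norm_sum_smul_sq x).const_mul _) (.of_forall fun ω ↦ ?_)
  simp only [← map_smul, ← map_sum]
  rw [← mul_pow]
  gcongr
  exact φ.le_opNorm _

end IsRademacherFam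

namespace ZeroAtInftyContinuousMap

open ZeroAtInfty

variable {α β : Type*} [TopologicalSpace α]

lemma sum_apply [AddCommMonoid β] [TopologicalSpace β] [ContinuousAdd β] {κ : Type*}
    (s : Finset κ) (f : κ → C₀(α, β)) (x : α) : (∑ k ∈ s, f k) x = ∑ k ∈ s, f k x :=
  map_sum (⟨⟨fun f : C₀(α, β) ↦ f x, rfl⟩, fun _ _ ↦ rfl⟩ : C₀(α, β) →+ β) f s

lemma norm_apply_le_norm [SeminormedAddCommGroup β] (f : C₀(α, β)) (x : α) : ‖f x‖ ≤ ‖f‖ :=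
  norm_toBCF_eq_norm (f := f) ▸ f.toBCF.norm_coe_le_norm x

lemma norm_le_of_forall_norm_apply_le [SeminormedAddCommGroup β] (f : C₀(α, β)) {c : ℝ}
    (hc : 0 ≤ c) (h : ∀ x, ‖f x‖ ≤ c) : ‖f‖ ≤ c :=
  norm_toBCF_eq_norm (f := f) ▸ (BoundedContinuousFunction.norm_le hc).mpr h

end ZeroAtInftyContinuousMap

section SquareSummable

variable {ι Ω X : Type*} [MeasurableSpace Ω] {μ : Measure Ω}
  [NormedAddCommGroup X] [NormedSpace ℝ X]

theorem boundedWith_range_of_tsum_norm_sq_le {r : ℕ → Ω → ℝ} (hr : IsRademacherFam μ r)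
    (T : ι → X →L[ℝ] ℝ) {C : ℝ} (hC : 0 ≤ C)
    (hT : ∑' i, ENNReal.ofReal (‖T i‖ ^ 2) ≤ ENNReal.ofReal (C ^ 2)) :
    BoundedWith μ r (Set.range T) C := by
  classical
  intro N S x hS
  choose g hg using hS
  have hrN := hr.comp_injective (e := fun n : Fin N ↦ n.1) Fin.val_injective
  set I := ∫ ω, ‖∑ n : Fin N, r n.1 ω • x n‖ ^ 2 ∂μ
  set s := Finset.univ.image g
  have hs : ∑ i ∈ s, ‖T i‖ ^ 2 ≤ C ^ 2 := by
    rw [← ENNReal.ofReal_le_ofReal_iff (by positivity),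
      ENNReal.ofReal_sum_of_nonneg fun i _ ↦ by positivity]
    exact (ENNReal.sum_le_tsum s).trans hT
  have hsum : ∑ n, S n (x n) ^ 2 ≤ C ^ 2 * I := calc
    ∑ n, S n (x n) ^ 2 ≤ ∑ n, ∑ i ∈ s, T i (x n) ^ 2 := Finset.sum_le_sum fun n _ ↦ by
      rw [← hg n]
      exact Finset.single_le_sum (fun i _ ↦ sq_nonneg (T i (x n))) (Finset.mem_image_of_mem g
        (Finset.mem_univ n))
    _ = ∑ i ∈ s, ∑ n, T i (x n) ^ 2 := Finset.sum_comm
    _ ≤ ∑ i ∈ s, ‖T i‖ ^ 2 * I := Finset.sum_le_sum fun i _ ↦ hrN.sum_sq_apply_le (T i) x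
    _ = (∑ i ∈ s, ‖T i‖ ^ 2) * I := (Finset.sum_mul ..).symm
    _ ≤ C ^ 2 * I := by gcongr
  rw [hrN.integral_norm_sum_smul_sq, ← Real.sqrt_sq hC, ← Real.sqrt_mul (sq_nonneg C)]
  exact Real.sqrt_le_sqrt hsum

end SquareSummable

section UnitVectors

open ZeroAtInfty

def c0single (n : ℕ) : C₀(ℕ, ℝ) :=
  ⟨⟨Pi.single n 1, continuous_of_discreteTopology⟩, by
    rw [cocompact_eq_cofinite]
    refine tendsto_const_nhds.congr' ?_
    filter_upwards [(Set.finite_singleton n).eventually_cofinite_notMem] with m hm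
    exact (Pi.single_eq_of_ne (M := fun _ : ℕ ↦ ℝ) hm 1).symm⟩

@[simp] lemma c0single_apply (n m : ℕ) : c0single n m = if m = n then 1 else 0 := by
  simp [c0single, Pi.single_apply]

lemma norm_sum_smul_c0single_le (s : Finset ℕ) (c : ℕ → ℝ) (hc : ∀ n ∈ s, |c n| ≤ 1) :
    ‖∑ n ∈ s, c n • c0single n‖ ≤ 1 := by
  refine ZeroAtInftyContinuousMap.norm_le_of_forall_norm_apply_le _ zero_le_one fun m ↦ ?_
  simp only [ZeroAtInftyContinuousMap.sum_apply, ZeroAtInftyContinuousMap.smul_apply,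
    c0single_apply, smul_eq_mul, mul_ite, mul_one, mul_zero, Finset.sum_ite_eq]
  split_ifs with hm
  exacts [hc m hm, by simp]

lemma integral_norm_sum_smul_c0single_sq_le_one {Ω : Type*} [MeasurableSpace Ω]
    {μ : Measure Ω} {r : ℕ → Ω → ℝ} (hr : IsRademacherFam μ r) (N : ℕ) :
    ∫ ω, ‖∑ n : Fin N, r n.1 ω • c0single n.1‖ ^ 2 ∂μ ≤ 1 := by
  have := hr.1
  have hbound : ∀ᵐ ω ∂μ, ‖∑ n : Fin N, r n.1 ω • c0single n.1‖ ^ 2 ≤ 1 := by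
    filter_upwards [ae_all_iff.mpr hr.ae_abs_eq_one] with ω hω
    rw [Fin.sum_univ_eq_sum_range (fun n ↦ r n ω • c0single n)]
    exact pow_le_one₀ (norm_nonneg _) (norm_sum_smul_c0single_le _ _ fun n _ ↦ (hω n).le)
  simpa using integral_mono_ae ((hr.comp_injective Fin.val_injective).integrable_norm_sum_smul_sq
    (fun n : Fin N ↦ c0single n.1)) (integrable_const 1) hbound

theorem sum_sq_apply_c0single_le_of_boundedWith {Ω : Type*} [MeasurableSpace Ω]
    {μ : Measure Ω} {r : ℕ → Ω → ℝ} (hr : IsRademacherFam μ r) (T : ℕ → C₀(ℕ, ℝ) →L[ℝ] ℝ)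
    {C : ℝ} (hC : 0 ≤ C) (hB : BoundedWith μ r (Set.range T) C) (N : ℕ) :
    ∑ n ∈ Finset.range N, T n (c0single n) ^ 2 ≤ C ^ 2 := by
  have hrN := hr.comp_injective (e := fun n : Fin N ↦ n.1) Fin.val_injective
  have h := hB N (fun n ↦ T n.1) (fun n ↦ c0single n.1) fun n ↦ ⟨n.1, rfl⟩
  rw [hrN.integral_norm_sum_smul_sq, Fin.sum_univ_eq_sum_range (fun n ↦ T n (c0single n) ^ 2)]
    at h
  have hI := Real.sqrt_le_one.mpr (integral_norm_sum_smul_c0single_sq_le_one hr N)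
  exact (Real.sqrt_le_iff.mp (h.trans (mul_le_of_le_one_right hC hI))).2

end UnitVectors

open ZeroAtInfty in
/-- **Proposition 3.1.**  Let `(aₙ)` be scalars and `Tₙ ∈ (c₀)*` be given by `Tₙ x = aₙ xₙ`.
Then `ℛ({Tₙ}) = ‖a‖_{ℓ²}` (both sides possibly infinite): for every `C ≥ 0`, the family
is `R`-bounded with constant `C` if and only if `∑ aₙ² ≤ C²`. -/
theorem rBound_diagonal_c0_eq_l2Norm
    {Ω : Type*} [MeasurableSpace Ω] (μ : Measure Ω) (r : ℕ → Ω → ℝ)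
    (hr : IsRademacherFam μ r) (a : ℕ → ℝ)
    (T : ℕ → C₀(ℕ, ℝ) →L[ℝ] ℝ) (hT : ∀ (n : ℕ) (x : C₀(ℕ, ℝ)), T n x = a n * x n)
    (C : ℝ) (hC : 0 ≤ C) :
    BoundedWith μ r (Set.range T) C ↔
      ∑' n, ENNReal.ofReal (a n ^ 2) ≤ ENNReal.ofReal (C ^ 2) := by
  constructor
  · intro hB
    refine ENNReal.tsum_le_of_sum_range_le fun N ↦ ?_
    rw [← ENNReal.ofReal_sum_of_nonneg fun n _ ↦ sq_nonneg (a n)]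
    refine ENNReal.ofReal_le_ofReal ?_
    simpa [hT] using sum_sq_apply_c0single_le_of_boundedWith hr T hC hB N
  · intro ha
    have hnorm (n : ℕ) : ‖T n‖ ≤ |a n| :=
      (T n).opNorm_le_bound (abs_nonneg _) fun x ↦ by
        rw [hT, norm_mul, Real.norm_eq_abs]
        gcongr
        exact x.norm_apply_le_norm n
    refine boundedWith_range_of_tsum_norm_sq_le hr T hC
      (le_trans (ENNReal.tsum_le_tsum fun n ↦ ?_) ha)
    rw [← sq_abs (a n)]
    gcongr
    exact hnorm n
end
end

section
/- Let J, N ≥ 1, let x_1, …, x_J ∈ c_0, let A_1, …, A_N be pairwise disjoint subsets of {1,…,J}, and let γ_1, …, γ_J be independent standard Gaussian random variables. For 1 ≤ n ≤ N set Γ_n = ∑_{j∈A_n} γ_j x_j ∈ c_0 and let Γ_n(n) denote the n-th coordinate of Γ_n. Then E[max_{1≤n≤N} |Γ_n(n)|²] ≤ E‖∑_{j=1}^J γ_j x_j‖²_{c_0}. -/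
open MeasureTheory ProbabilityTheory Filter ENNReal

noncomputable section

/-!
For a sign pattern `ε ∈ {±1}^N` let `Y_ε = ∑ⱼ ε(j) γⱼ xⱼ`, where `ε(j) = εₙ` for `j ∈ Aₙ` and
`ε(j) = 1` outside the blocks. Averaging `εₙ Y_ε` over all `2^N` patterns cancels every block
except `Aₙ`, so `2^N Γₙ = ∑_ε εₙ Y_ε`. Evaluating at the `n`-th coordinate and applying
Cauchy–Schwarz gives the pointwise bound `maxₙ |Γₙ(n)|² ≤ 2^{-N} ∑_ε ‖Y_ε‖²`, whose right side
no longer depends on `n`. The Gaussians are independent and symmetric, so every `Y_ε` has the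
law of `∑ⱼ γⱼ xⱼ`; taking expectations gives the claim.
-/

open Function

section BlockSign

variable {ι κ : Type*} [Fintype ι] [DecidableEq ι] [DecidableEq κ]

/-- For pairwise disjoint blocks this is `ε i` on `A i` and `1` off `⋃ i, A i`. -/
def blockSign (A : ι → Finset κ) (ε : ι → ℤˣ) (j : κ) : ℤˣ :=
  ∏ i, if j ∈ A i then ε i else 1

theorem sum_coe_mul_blockSign {A : ι → Finset κ} (hA : Pairwise (Disjoint on A)) (i : ι)
    (j : κ) :
    ∑ ε : ι → ℤˣ, ((ε i * blockSign A ε j : ℤˣ) : ℤ) =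
      if j ∈ A i then 2 ^ Fintype.card ι else 0 := by
  have factor (ε : ι → ℤˣ) : ((ε i * blockSign A ε j : ℤˣ) : ℤ) =
      ∏ m, (((if m = i then ε m else 1) * (if j ∈ A m then ε m else 1) : ℤˣ) : ℤ) := by
    rw [← Units.coe_prod, Finset.prod_mul_distrib, Finset.prod_ite_eq' Finset.univ i,
      if_pos (Finset.mem_univ i), blockSign]
  rw [Fintype.sum_congr _ _ factor, ← Fintype.prod_sum
    (fun m (u : ℤˣ) => (((if m = i then u else 1) * (if j ∈ A m then u else 1) : ℤˣ) : ℤ))]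
  split_ifs with hj
  · rw [← Finset.card_univ, ← Finset.prod_const]
    refine Finset.prod_congr rfl fun m _ => ?_
    by_cases hm : m = i
    · subst hm
      simp [hj]
    · simp [hm, Finset.disjoint_right.mp (hA hm) hj]
  · exact Finset.prod_eq_zero (Finset.mem_univ i) (by simp [hj])

theorem sum_smul_sum_blockSign_smul {E : Type*} [AddCommGroup E] [Fintype κ]
    {A : ι → Finset κ} (hA : Pairwise (Disjoint on A)) (v : κ → E) (i : ι) :
    ∑ ε : ι → ℤˣ, ε i • ∑ j, blockSign A ε j • v j =
      (2 ^ Fintype.card ι : ℤ) • ∑ j ∈ A i, v j := by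
  simp_rw [Finset.smul_sum, smul_smul, Units.smul_def]
  rw [Finset.sum_comm]
  simp_rw [← Finset.sum_smul, sum_coe_mul_blockSign hA, ite_smul, zero_smul,
    Finset.sum_ite_mem, Finset.univ_inter]

theorem sq_map_sum_le_sum_sq_norm_blockSign_div {E : Type*} [SeminormedAddCommGroup E]
    [Fintype κ] {A : ι → Finset κ} (hA : Pairwise (Disjoint on A)) (φ : E →+ ℝ)
    (hφ : ∀ y, ‖φ y‖ ≤ ‖y‖) (v : κ → E) (i : ι) :
    φ (∑ j ∈ A i, v j) ^ 2 ≤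
      (∑ ε : ι → ℤˣ, ‖∑ j, blockSign A ε j • v j‖ ^ 2) / 2 ^ Fintype.card ι := by
  set K : ℝ := 2 ^ Fintype.card ι
  have hK : 0 < K := by positivity
  have hcard : ((Finset.univ : Finset (ι → ℤˣ)).card : ℝ) = K := by simp [K]
  have hφsum : K * φ (∑ j ∈ A i, v j) =
      ∑ ε : ι → ℤˣ, ((ε i : ℤ) : ℝ) * φ (∑ j, blockSign A ε j • v j) := by
    simpa [map_sum, map_zsmul, Units.smul_def, K] using
      (congrArg φ (sum_smul_sum_blockSign_smul hA v i)).symm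
  have habs : |K * φ (∑ j ∈ A i, v j)| ≤ ∑ ε : ι → ℤˣ, ‖∑ j, blockSign A ε j • v j‖ := by
    rw [hφsum]
    refine (Finset.abs_sum_le_sum_abs _ _).trans (Finset.sum_le_sum fun ε _ => ?_)
    rw [abs_mul, abs_unit_intCast, one_mul, ← Real.norm_eq_abs]
    exact hφ _
  have hsq := (sq_le_sq' (abs_le.mp habs).1 (abs_le.mp habs).2).trans
    (sq_sum_le_card_mul_sum_sq (s := Finset.univ)
      (f := fun ε : ι → ℤˣ => ‖∑ j, blockSign A ε j • v j‖))
  rw [hcard, mul_pow, sq K, mul_assoc] at hsq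
  rw [le_div_iff₀ hK]
  nlinarith

end BlockSign

namespace ZeroAtInftyContinuousMap

variable {α β : Type*} [TopologicalSpace α]

@[simps]
def evalAddMonoidHom [TopologicalSpace β] [AddMonoid β] [ContinuousAdd β] (a : α) :
    ZeroAtInftyContinuousMap α β →+ β where
  toFun f := f a
  map_zero' := rfl
  map_add' _ _ := rfl

theorem norm_apply_le [SeminormedAddCommGroup β] (f : ZeroAtInftyContinuousMap α β) (a : α) :
    ‖f a‖ ≤ ‖f‖ := by
  rw [← norm_toBCF_eq_norm]
  exact f.toBCF.norm_coe_le_norm a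

end ZeroAtInftyContinuousMap

open ZeroAtInfty in
theorem iSup_sq_apply_sum_le_sum_sq_norm_blockSign_div {κ : Type*} [Fintype κ] [DecidableEq κ]
    {N : ℕ} {A : Fin N → Finset κ} (hA : Pairwise (Disjoint on A)) (v : κ → ℝ)
    (x : κ → C₀(ℕ, ℝ)) :
    ⨆ n : Fin N, ((∑ j ∈ A n, v j • x j : C₀(ℕ, ℝ)) (n : ℕ)) ^ 2 ≤
      (∑ ε : Fin N → ℤˣ, ‖∑ j, (blockSign A ε j • v j) • x j‖ ^ 2) / 2 ^ N := by
  refine Real.iSup_le (fun n => ?_) (by positivity)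
  have hn := sq_map_sum_le_sum_sq_norm_blockSign_div hA
    (ZeroAtInftyContinuousMap.evalAddMonoidHom (n : ℕ)) (fun f => f.norm_apply_le n)
    (fun j => v j • x j) n
  simp only [Fintype.card_fin, ZeroAtInftyContinuousMap.evalAddMonoidHom_apply,
    ← smul_assoc] at hn
  exact hn

section

variable {Ω ι : Type*} [MeasurableSpace Ω] {μ : Measure Ω}

theorem identDistrib_units_smul_of_map_neg [IsProbabilityMeasure μ] [Fintype ι]
    {g : ι → Ω → ℝ} (hg : ∀ i, Measurable (g i)) (hind : iIndepFun g μ)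
    (hsymm : ∀ i, μ.map (fun ω => -g i ω) = μ.map (g i)) (ε : ι → ℤˣ) :
    IdentDistrib (fun ω i => ε i • g i ω) (fun ω i => g i ω) μ μ := by
  have hεg : ∀ i, Measurable (fun ω => ε i • g i ω) := fun i => (hg i).const_smul _
  refine ⟨by fun_prop, by fun_prop, ?_⟩
  rw [(iIndepFun_iff_map_fun_eq_pi_map fun i => (hεg i).aemeasurable).1
      (hind.comp (fun i t => ε i • t) fun i => measurable_const_smul _),
    (iIndepFun_iff_map_fun_eq_pi_map fun i => (hg i).aemeasurable).1 hind]
  congr 1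
  funext i
  rcases Int.units_eq_one_or (ε i) with h | h <;> simp [h, Units.smul_def, hsymm]

theorem integrable_norm_sum_smul_sq {κ E : Type*} [Fintype κ] [NormedAddCommGroup E]
    [NormedSpace ℝ E] {f : κ → Ω → ℝ} (hf : ∀ j, MemLp (f j) 2 μ) (x : κ → E) :
    Integrable (fun ω => ‖∑ j, f j ω • x j‖ ^ 2) μ :=
  (memLp_finsetSum _ fun j _ => (memLp_top_const (x j)).smul (hf j)).integrable_norm_pow
    two_ne_zero

end

namespace IsGaussianFam

variable {Ω ι : Type*} [MeasurableSpace Ω] {μ : Measure Ω} {g : ι → Ω → ℝ}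

theorem map_neg (hg : IsGaussianFam μ g) (i : ι) :
    μ.map (fun ω => -g i ω) = μ.map (g i) := by
  rw [show (fun ω => -g i ω) = Neg.neg ∘ g i from rfl,
    ← Measure.map_map measurable_neg (hg.2.1 i), hg.2.2.2 i, gaussianReal_map_neg, neg_zero]

theorem memLp_two (hg : IsGaussianFam μ g) (i : ι) : MemLp (g i) 2 μ :=
  (memLp_map_measure_iff aestronglyMeasurable_id (hg.2.1 i).aemeasurable).1
    (hg.2.2.2 i ▸ memLp_id_gaussianReal 2)

end IsGaussianFam

open ZeroAtInfty in
theorem expectation_max_diagonal_sq_le_general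
    {Ω : Type*} [MeasurableSpace Ω] (μ : Measure Ω) (J N : ℕ)
    (g : Fin J → Ω → ℝ) (hg : IsGaussianFam μ g) (x : Fin J → C₀(ℕ, ℝ))
    (A : Fin N → Finset (Fin J)) (hA : ∀ m n : Fin N, m ≠ n → Disjoint (A m) (A n)) :
    ∫ ω, ⨆ n : Fin N, ((∑ j ∈ A n, g j ω • x j : C₀(ℕ, ℝ)) (n : ℕ)) ^ 2 ∂μ ≤
      ∫ ω, ‖∑ j, g j ω • x j‖ ^ 2 ∂μ := by
  have := hg.1
  let Y (ε : Fin N → ℤˣ) (ω : Ω) : C₀(ℕ, ℝ) := ∑ j, (blockSign A ε j • g j ω) • x j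
  have hY (ε : Fin N → ℤˣ) :
      IdentDistrib (fun ω => ‖Y ε ω‖ ^ 2) (fun ω => ‖∑ j, g j ω • x j‖ ^ 2) μ μ :=
    (identDistrib_units_smul_of_map_neg hg.2.1 hg.2.2.1 hg.map_neg (blockSign A ε)).comp
      (u := fun v : Fin J → ℝ => ‖∑ j, v j • x j‖ ^ 2) (Continuous.measurable (by fun_prop))
  have hY_int (ε : Fin N → ℤˣ) : Integrable (fun ω => ‖Y ε ω‖ ^ 2) μ :=
    (hY ε).integrable_iff.2 (integrable_norm_sum_smul_sq hg.memLp_two x)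
  calc ∫ ω, ⨆ n : Fin N, ((∑ j ∈ A n, g j ω • x j : C₀(ℕ, ℝ)) (n : ℕ)) ^ 2 ∂μ
      ≤ ∫ ω, (∑ ε, ‖Y ε ω‖ ^ 2) / 2 ^ N ∂μ :=
        integral_mono_of_nonneg (.of_forall fun ω => Real.iSup_nonneg fun n => sq_nonneg _)
          ((integrable_finsetSum _ fun ε _ => hY_int ε).div_const _)
          (.of_forall fun ω => iSup_sq_apply_sum_le_sum_sq_norm_blockSign_div hA (g · ω) x)
    _ = ∫ ω, ‖∑ j, g j ω • x j‖ ^ 2 ∂μ := by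
        rw [integral_div, integral_finsetSum _ fun ε _ => hY_int ε]
        simp [(hY _).integral_eq]

open ZeroAtInfty in
/-- The key estimate in the proof of Lemma 3.4: for `x₁, …, x_J ∈ c₀`, pairwise disjoint
subsets `A₁, …, A_N` of `{1, …, J}` and independent standard Gaussians `γ₁, …, γ_J`,
setting `Γₙ = ∑_{j ∈ Aₙ} γⱼ xⱼ`, one has
`E[maxₙ |Γₙ(n)|²] ≤ E‖∑ⱼ γⱼ xⱼ‖²`. -/
theorem expectation_max_diagonal_sq_le
    {Ω : Type*} [MeasurableSpace Ω] (μ : Measure Ω) (J N : ℕ) (hJ : 1 ≤ J) (hN : 1 ≤ N)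
    (g : Fin J → Ω → ℝ) (hg : IsGaussianFam μ g) (x : Fin J → C₀(ℕ, ℝ))
    (A : Fin N → Finset (Fin J)) (hA : ∀ m n : Fin N, m ≠ n → Disjoint (A m) (A n)) :
    ∫ ω, ⨆ n : Fin N, ((∑ j ∈ A n, g j ω • x j : C₀(ℕ, ℝ)) (n : ℕ)) ^ 2 ∂μ ≤
      ∫ ω, ‖∑ j, g j ω • x j‖ ^ 2 ∂μ :=
  expectation_max_diagonal_sq_le_general μ J N g hg x A hA

end
end
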